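/- arXiv:2010.15644 — 3 statements merged into one kernel-verified Lean document; each statement's English description precedes it below -/
import Mathlib

section
/- Every surjective group homomorphism from a finitely generated free group of rank n to a free group of rank n is an isomorphism (finitely generated free groups are Hopfian, stated for maps between two free groups of the same finite rank). -/
/-!
Free groups are residually finite: the partial products of a word for `g ≠ 1` form a finite set
`X ∋ 1` on which each generator acts by a partial injection `x ↦ a * x`; extending these to
permutations of `X` gives a finite permutation representation in which `g` sends `1` to `g`.

Mal'cev's argument then shows that a finitely generated residually finite group `G` is Hopfian:
if `f` is surjective and `f g = 1` with `g ≠ 1`, pick `q : G →* Q` with `Q` finite and `q g ≠ 1`.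
Precomposition with `f` is an injective self-map of the finite set `Hom(G, Q)`, hence surjective,
so `q = χ ∘ f` for some `χ`, and `q g = χ (f g) = 1`.
-/

open Function

theorem MonoidHom.finite_of_fg (G H : Type*) [Group G] [Group H] [Group.FG G] [Finite H] :
    Finite (G →* H) := by
  obtain ⟨α, _, φ, hφ⟩ := Group.fg_iff_exists_freeGroup_hom_surjective_finite.mp ‹Group.FG G›
  have : Finite (FreeGroup α →* H) := .of_equiv _ FreeGroup.lift
  exact .of_injective (fun χ : G →* H ↦ χ.comp φ) fun _ _ ↦ (MonoidHom.cancel_right hφ).mp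

theorem Group.ResiduallyFinite.injective_of_surjective {G : Type*} [Group G] [Group.FG G]
    [Group.ResiduallyFinite G] {f : G →* G} (hf : Surjective f) : Injective f := by
  refine (injective_iff_map_eq_one f).mpr fun g hg ↦ by_contra fun hg1 ↦ ?_
  obtain ⟨N, hgN⟩ := exists_finiteIndexNormalSubgroup_notMem g hg1
  have := MonoidHom.finite_of_fg G (G ⧸ N.toSubgroup)
  have hcomp : Injective fun χ : G →* G ⧸ N.toSubgroup ↦ χ.comp f :=
    fun _ _ ↦ (MonoidHom.cancel_right hf).mp
  obtain ⟨χ, hχ⟩ := Finite.injective_iff_surjective.mp hcomp (QuotientGroup.mk' N.toSubgroup)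
  have hg' : QuotientGroup.mk' N.toSubgroup g = 1 := by rw [← hχ]; simp [hg]
  exact hgN (FiniteIndexNormalSubgroup.mem_toSubgroup_iff.mp (by simpa using hg'))

theorem Finset.exists_perm_coe_apply_eq_mul {G : Type*} [Group G] (X : Finset G) (a : G) :
    ∃ σ : Equiv.Perm X, ∀ x : X, a * x ∈ X → (σ x : G) = a * x :=
  Set.MapsTo.exists_equiv_extend_of_card_eq (s := {x : X | a * x ∈ X}) (Fintype.card_coe X)
    (fun _ hx ↦ hx) fun _ _ _ _ h ↦ Subtype.ext (mul_left_cancel h)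

namespace FreeGroup

variable {α : Type*}

theorem lift_mk_apply_one {X : Finset (FreeGroup α)} (σ : α → Equiv.Perm X)
    (hσ : ∀ a (x : X), of a * (x : FreeGroup α) ∈ X → (σ a x : FreeGroup α) = of a * x)
    (t : List (α × Bool)) (ht : ∀ s, s <:+ t → mk s ∈ X) :
    (lift σ (mk t) ⟨1, ht [] t.nil_suffix⟩ : FreeGroup α) = mk t := by
  induction t with
  | nil => rfl
  | cons l t ih =>
    obtain ⟨a, b⟩ := l
    have hmk : mk ((a, b) :: t) = mk [(a, b)] * mk t := by rw [mul_mk]; rfl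
    have hx := ht _ (List.suffix_refl _)
    rw [hmk] at hx ⊢
    have ih' : lift σ (mk t) ⟨1, _⟩ = ⟨mk t, ht t (List.suffix_cons _ _)⟩ :=
      Subtype.ext (ih fun s hs ↦ ht s (hs.trans (List.suffix_cons _ _)))
    rw [MonoidHom.map_mul, Equiv.Perm.mul_apply, ih']
    cases b with
    | true => exact hσ a _ hx
    | false =>
      change (of a)⁻¹ * mk t ∈ X at hx
      change ((σ a)⁻¹ _ : FreeGroup α) = (of a)⁻¹ * mk t
      have hσx : σ a ⟨_, hx⟩ = ⟨mk t, ht t (List.suffix_cons _ _)⟩ := by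
        ext
        rw [hσ a _ (by simpa using ht t (List.suffix_cons _ _)), mul_inv_cancel_left]
      rw [Equiv.Perm.inv_eq_iff_eq.mpr hσx.symm]

instance residuallyFinite : Group.ResiduallyFinite (FreeGroup α) := by
  refine Group.residuallyFinite_of_forall_exists_finite_monoidHom fun g hg ↦ ?_
  classical
  let X : Finset (FreeGroup α) := g.toWord.tails.toFinset.image mk
  have hX : ∀ s, s <:+ g.toWord → mk s ∈ X := fun s hs ↦
    Finset.mem_image_of_mem mk (List.mem_toFinset.mpr ((List.mem_tails _ _).mpr hs))
  choose σ hσ using fun a ↦ X.exists_perm_coe_apply_eq_mul (of a)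
  refine ⟨Equiv.Perm X, inferInstance, inferInstance, lift σ, fun h ↦ hg ?_⟩
  have := lift_mk_apply_one σ hσ g.toWord hX
  rwa [mk_toWord, h, eq_comm] at this

end FreeGroup

/-- Every surjective homomorphism between finitely generated free groups of the same
finite rank `n` is injective (hence an isomorphism): the Hopfian property. -/
theorem stmt1 {n : ℕ} (φ : FreeGroup (Fin n) →* FreeGroup (Fin n))
    (hφ : Function.Surjective φ) : Function.Injective φ :=
  Group.ResiduallyFinite.injective_of_surjective hφ
end

section
/- Let A and B be groups and f : A → B a homomorphism inducing an isomorphism on H₁(−; ℤ) (abelianizations) and a surjection on H₂(−; ℤ). Then for every finite k ≥ 1, f induces an isomorphism A/A_k → B/B_k of the quotients by the lower central series terms (Stallings' integral theorem). -/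
/- `H₂(G; ℤ)` is modelled by Hopf's formula `(R ∩ [F,F])/[F,R]` for the canonical free
presentation `F = FreeGroup G → G` with kernel `R`; the map induced by `f` comes from
`FreeGroup.map f`. -/

abbrev canonicalPresentation (G : Type*) [Group G] : FreeGroup G →* G :=
  FreeGroup.lift id

abbrev presKer (G : Type*) [Group G] : Subgroup (FreeGroup G) :=
  (canonicalPresentation G).ker

abbrev hopfNum (G : Type*) [Group G] : Subgroup (FreeGroup G) :=
  presKer G ⊓ commutator (FreeGroup G)

abbrev hopfDen (G : Type*) [Group G] : Subgroup (FreeGroup G) :=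
  ⁅(⊤ : Subgroup (FreeGroup G)), presKer G⁆

abbrev H2Group (G : Type*) [Group G] :=
  ↥(hopfNum G) ⧸ ((hopfDen G).subgroupOf (hopfNum G))

noncomputable def H2Map {A B : Type*} [Group A] [Group B] (f : A →* B) :
    H2Group A →* H2Group B :=
  QuotientGroup.map _ _
    (((FreeGroup.map (f : A → B)).domRestrict (hopfNum A)).codRestrict (hopfNum B)
      (fun x => by
        obtain ⟨hker, hcomm⟩ := x.2
        constructor
        · have : (canonicalPresentation B).comp (FreeGroup.map (f : A → B)) =
              f.comp (canonicalPresentation A) := by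
            ext a
            simp [canonicalPresentation]
          have heq := congrArg (fun g => g x.1) this
          simp only [MonoidHom.comp_apply] at heq
          show FreeGroup.map (f : A → B) x.1 ∈ (canonicalPresentation B).ker
          rw [MonoidHom.mem_ker, heq]
          have hker' : canonicalPresentation A x.1 = 1 := hker
          rw [hker', map_one]
        · have : Subgroup.map (FreeGroup.map (f : A → B)) (commutator (FreeGroup A)) ≤
              commutator (FreeGroup B) := by
            rw [commutator, Subgroup.map_commutator]
            exact Subgroup.commutator_mono le_top le_top
          exact this ⟨x.1, hcomm, rfl⟩))
    (by
      rintro ⟨x, hx⟩ hmem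
      simp only [Subgroup.mem_subgroupOf] at hmem ⊢
      have : Subgroup.map (FreeGroup.map (f : A → B)) (hopfDen A) ≤ hopfDen B := by
        rw [hopfDen, Subgroup.map_commutator]
        refine Subgroup.commutator_mono le_top ?_
        rintro y ⟨z, hz, rfl⟩
        have : (canonicalPresentation B).comp (FreeGroup.map (f : A → B)) =
            f.comp (canonicalPresentation A) := by
          ext a; simp [canonicalPresentation]
        have hz' := congrArg (fun g => g z) this
        simp only [MonoidHom.comp_apply] at hz'
        show FreeGroup.map (f : A → B) z ∈ (canonicalPresentation B).ker
        rw [MonoidHom.mem_ker, hz']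
        have hz'' : canonicalPresentation A z = 1 := hz
        rw [hz'', map_one]
      exact this ⟨x, hmem, rfl⟩)

/-! Stallings' argument, by induction on `k`. Surjectivity of `A/A_k → B/B_k` only uses `H₁`:
modulo `B_{k+1}` the image of `f` together with the central subgroup `B_k` is everything, and so
is the image of `f` together with `[B, B]`; a subgroup with both properties is the whole group.

For injectivity let `N = A_k ≤ [A, A]`. The map `H₂(A/N) → N/[N, A]` of the five-term exact
sequence is realised concretely: an element of `R ∩ [F, F]` for the presentation of `A/N` is sent
to the product of chosen representatives (`sectionLift`), which lies in `N`, hits all of `N`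
modulo `[N, A]`, and vanishes there exactly on the image of `H₂(A)`. This is natural in `f`, so
the induction hypothesis `A/A_k ≅ B/B_k` and surjectivity on `H₂` give injectivity on `A_{k+1}`. -/

open scoped commutatorElement
open QuotientGroup

theorem QuotientGroup.mk_mem_center_of_commutator_le {G : Type*} [Group G] {N D : Subgroup G}
    [D.Normal] (h : ⁅N, (⊤ : Subgroup G)⁆ ≤ D) {n : G} (hn : n ∈ N) :
    (n : G ⧸ D) ∈ Subgroup.center (G ⧸ D) := by
  have : n ∈ D.upperCentralSeriesStep := fun y =>
    h (Subgroup.commutator_mem_commutator hn (Subgroup.mem_top y))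
  rwa [Subgroup.upperCentralSeriesStep_eq_comap_center] at this

theorem commutatorElement_mul_mul_of_mem_center {G : Type*} [Group G] (h₁ h₂ : G) {z₁ z₂ : G}
    (hz₁ : z₁ ∈ Subgroup.center G) (hz₂ : z₂ ∈ Subgroup.center G) :
    ⁅h₁ * z₁, h₂ * z₂⁆ = ⁅h₁, h₂⁆ := by
  have c₁ := Subgroup.mem_center_iff.mp hz₁
  have c₂ := Subgroup.mem_center_iff.mp hz₂
  calc ⁅h₁ * z₁, h₂ * z₂⁆ = h₁ * z₁ * h₂ * (z₂ * (z₁⁻¹ * h₁⁻¹)) * z₂⁻¹ * h₂⁻¹ := by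
        rw [commutatorElement_def]; group
    _ = h₁ * (z₁ * (h₂ * z₁⁻¹)) * h₁⁻¹ * h₂⁻¹ := by rw [← c₂ (z₁⁻¹ * h₁⁻¹)]; group
    _ = ⁅h₁, h₂⁆ := by rw [← c₁ (h₂ * z₁⁻¹), commutatorElement_def]; group

theorem Subgroup.eq_top_of_sup_center_eq_top {G : Type*} [Group G] {H Z : Subgroup G}
    (hZ : Z ≤ center G) (hHZ : H ⊔ Z = ⊤) (hHC : H ⊔ _root_.commutator G = ⊤) : H = ⊤ := by
  have : Z.Normal := ⟨fun z hz g => by rwa [mem_center_iff.mp (hZ hz) g, mul_inv_cancel_right]⟩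
  have hdecomp (g : G) : ∃ h ∈ H, ∃ z ∈ Z, h * z = g :=
    mem_sup_of_normal_right.mp (hHZ ▸ mem_top g)
  have hcomm : _root_.commutator G ≤ H := by
    rw [_root_.commutator_def, commutator_le]
    intro g₁ _ g₂ _
    obtain ⟨h₁, hh₁, z₁, hz₁, rfl⟩ := hdecomp g₁
    obtain ⟨h₂, hh₂, z₂, hz₂, rfl⟩ := hdecomp g₂
    rw [commutatorElement_mul_mul_of_mem_center h₁ h₂ (hZ hz₁) (hZ hz₂), commutatorElement_def]
    exact H.mul_mem (H.mul_mem (H.mul_mem hh₁ hh₂) (H.inv_mem hh₁)) (H.inv_mem hh₂)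
  rwa [sup_eq_left.mpr hcomm] at hHC

theorem MonoidHom.map_commutator_le {G H : Type*} [Group G] [Group H] (f : G →* H) :
    (commutator G).map f ≤ commutator H := by
  rw [map_commutator_eq, commutator_def]
  exact Subgroup.commutator_mono le_top le_top

theorem MonoidHom.map_commutator_of_surjective {G H : Type*} [Group G] [Group H] {f : G →* H}
    (hf : Function.Surjective f) : (commutator G).map f = commutator H := by
  rw [map_commutator_eq, f.range_eq_top.mpr hf, commutator_def]

theorem MonoidHom.lowerCentralSeries_le_comap {G H : Type*} [Group G] [Group H] (f : G →* H)
    (k : ℕ) :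
    (⊤ : Subgroup G).lowerCentralSeries k ≤ ((⊤ : Subgroup H).lowerCentralSeries k).comap f :=
  Subgroup.map_le_iff_le_comap.mp <|
    (Subgroup.map_lowerCentralSeries _ f k).trans_le (Subgroup.lowerCentralSeries_mono k le_top)

theorem MonoidHom.range_sup_lowerCentralSeries_eq_top {A B : Type*} [Group A] [Group B]
    (f : A →* B) (h : f.range ⊔ commutator B = ⊤) (k : ℕ) :
    f.range ⊔ (⊤ : Subgroup B).lowerCentralSeries k = ⊤ := by
  induction k with
  | zero => exact sup_top_eq _
  | succ k ih =>
    set N := (⊤ : Subgroup B).lowerCentralSeries (k + 1)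
    have hq := QuotientGroup.mk'_surjective N
    have hrange : f.range.map (QuotientGroup.mk' N) = ⊤ := by
      refine Subgroup.eq_top_of_sup_center_eq_top
        (Z := ((⊤ : Subgroup B).lowerCentralSeries k).map (QuotientGroup.mk' N)) ?_ ?_ ?_
      · rintro _ ⟨b, hb, rfl⟩
        exact mk_mem_center_of_commutator_le le_rfl hb
      · rw [← Subgroup.map_sup, ih, Subgroup.map_top_of_surjective _ hq]
      · rw [commutator_def, ← Subgroup.map_top_of_surjective _ hq, ← Subgroup.map_commutator,
          ← Subgroup.map_sup, ← commutator_def, h]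
    simpa [Subgroup.comap_map_eq] using congrArg (Subgroup.comap (QuotientGroup.mk' N)) hrange

theorem QuotientGroup.map_bijective {A B : Type*} [Group A] [Group B] {f : A →* B}
    {NA : Subgroup A} {NB : Subgroup B} [NA.Normal] [NB.Normal] (hle : NA ≤ NB.comap f)
    (hcomap : NB.comap f ≤ NA) (hsup : f.range ⊔ NB = ⊤) :
    Function.Bijective (map NA NB f hle) := by
  refine ⟨(MonoidHom.ker_eq_bot_iff _).mp ?_,
    map_surjective_of_surjective _ _ _ (fun q => ?_) hle⟩
  · rw [ker_map, Subgroup.map_eq_bot_iff, ker_mk']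
    exact hcomap
  · induction q using QuotientGroup.induction_on with | _ b => ?_
    obtain ⟨_, ⟨a, rfl⟩, n, hn, hb⟩ := Subgroup.mem_sup_of_normal_right.mp
      (show b ∈ f.range ⊔ NB from hsup ▸ Subgroup.mem_top b)
    refine ⟨a, ?_⟩
    simp [← hb, hn]

theorem Abelianization.range_sup_commutator_eq_top_of_map_surjective {A B : Type*} [Group A]
    [Group B] (f : A →* B) (h : Function.Surjective (Abelianization.map f)) :
    f.range ⊔ commutator B = ⊤ := by
  rw [← Abelianization.ker_of, ← Subgroup.comap_map_eq, eq_top_iff]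
  rintro b -
  obtain ⟨x, hx⟩ := h (Abelianization.of b)
  induction x using QuotientGroup.induction_on with
  | _ a => exact ⟨f a, ⟨a, rfl⟩, hx⟩

theorem Abelianization.comap_commutator_le_of_map_injective {A B : Type*} [Group A] [Group B]
    (f : A →* B) (h : Function.Injective (Abelianization.map f)) :
    (commutator B).comap f ≤ commutator A := by
  intro a ha
  rw [← Abelianization.ker_of] at ha ⊢
  exact h (ha.trans (map_one _).symm)

theorem FreeGroup.mul_inv_mem_commutator_of_mk'_comp_eq {S G : Type*} [Group G]
    {M M' : FreeGroup S →* G} {N : Subgroup G} [N.Normal]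
    (h : (mk' N).comp M' = (mk' N).comp M) {x : FreeGroup S}
    (hx : x ∈ commutator (FreeGroup S)) : M' x * (M x)⁻¹ ∈ ⁅N, (⊤ : Subgroup G)⁆ := by
  set D := ⁅N, (⊤ : Subgroup G)⁆
  have hN (y : FreeGroup S) : M' y * (M y)⁻¹ ∈ N := by
    rw [← QuotientGroup.eq_one_iff, QuotientGroup.mk_mul, QuotientGroup.mk_inv, mul_inv_eq_one]
    exact DFunLike.congr_fun h y
  have hc (y : FreeGroup S) : ((M' y * (M y)⁻¹ : G) : G ⧸ D) ∈ Subgroup.center _ :=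
    mk_mem_center_of_commutator_le le_rfl (hN y)
  -- modulo `D` the discrepancy `y ↦ M' y * (M y)⁻¹` is central, hence a homomorphism, and a
  -- homomorphism with central image kills commutators
  let d : FreeGroup S →* G ⧸ D :=
    { toFun y := (M' y * (M y)⁻¹ : G)
      map_one' := by simp
      map_mul' y z := by
        have hcomm := Subgroup.mem_center_iff.mp (hc z) ((M y)⁻¹ : G)
        simp only [QuotientGroup.mk_mul, QuotientGroup.mk_inv] at hcomm
        simp [mul_assoc, hcomm] }
  have hker : commutator (FreeGroup S) ≤ d.ker := by
    rw [commutator_def, Subgroup.commutator_le]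
    intro g₁ _ g₂ _
    rw [MonoidHom.mem_ker, map_commutatorElement, commutatorElement_eq_one_iff_mul_comm]
    exact (Subgroup.mem_center_iff.mp (hc g₁) (d g₂)).symm
  exact (QuotientGroup.eq_one_iff _).mp (hker hx)

section Hopf

variable {G : Type*} [Group G]

theorem canonicalPresentation_surjective : Function.Surjective (canonicalPresentation G) :=
  fun g => ⟨FreeGroup.of g, by simp⟩

theorem canonicalPresentation_comp_map {H : Type*} [Group H] (f : G →* H) :
    (canonicalPresentation H).comp (FreeGroup.map f) = f.comp (canonicalPresentation G) :=
  FreeGroup.ext_hom _ _ fun _ => by simp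

theorem map_mem_hopfNum {H : Type*} [Group H] (f : G →* H) {x : FreeGroup G}
    (hx : x ∈ hopfNum G) : FreeGroup.map f x ∈ hopfNum H := by
  refine Subgroup.mem_inf.mpr ⟨?_, (FreeGroup.map f).map_commutator_le ⟨x, hx.2, rfl⟩⟩
  rw [MonoidHom.mem_ker, ← MonoidHom.comp_apply, canonicalPresentation_comp_map,
    MonoidHom.comp_apply, hx.1, map_one]

theorem H2Map_mk {H : Type*} [Group H] (f : G →* H) {x : FreeGroup G} (hx : x ∈ hopfNum G) :
    H2Map f (mk ⟨x, hx⟩) = mk ⟨FreeGroup.map f x, map_mem_hopfNum f hx⟩ :=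
  rfl

theorem H2Map_comp {H K : Type*} [Group H] [Group K] (f : G →* H) (g : H →* K)
    (ξ : H2Group G) : H2Map (g.comp f) ξ = H2Map g (H2Map f ξ) := by
  induction ξ using QuotientGroup.induction_on with
  | _ x =>
    rw [← x.eta x.2, H2Map_mk, H2Map_mk, H2Map_mk]
    congr 2
    exact (FreeGroup.map.comp (⇑f) (⇑g) x.1).symm

theorem H2Map_id (ξ : H2Group G) : H2Map (MonoidHom.id G) ξ = ξ := by
  induction ξ using QuotientGroup.induction_on with
  | _ x =>
    rw [← x.eta x.2, H2Map_mk]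
    congr 2
    exact FreeGroup.map.id x.1

theorem H2Map_injective_of_bijective {H : Type*} [Group H] {f : G →* H}
    (hf : Function.Bijective f) : Function.Injective (H2Map f) := by
  let e := MulEquiv.ofBijective f hf
  have hinv : e.symm.toMonoidHom.comp f = MonoidHom.id G := MonoidHom.ext e.symm_apply_apply
  refine Function.LeftInverse.injective (g := H2Map e.symm.toMonoidHom) fun ξ => ?_
  rw [← H2Map_comp, hinv, H2Map_id]

variable (N : Subgroup G) [N.Normal]

noncomputable def sectionLift : FreeGroup (G ⧸ N) →* G :=
  FreeGroup.lift fun x => x.out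

theorem mk'_comp_sectionLift : (mk' N).comp (sectionLift N) = canonicalPresentation (G ⧸ N) :=
  FreeGroup.ext_hom _ _ fun _ => by simp [sectionLift]

theorem mk_sectionLift (x : FreeGroup (G ⧸ N)) :
    (sectionLift N x : G ⧸ N) = canonicalPresentation (G ⧸ N) x :=
  DFunLike.congr_fun (mk'_comp_sectionLift N) x

theorem map_sectionLift_hopfDen_le :
    (hopfDen (G ⧸ N)).map (sectionLift N) ≤ ⁅N, (⊤ : Subgroup G)⁆ := by
  rw [Subgroup.map_commutator, Subgroup.commutator_comm]
  refine Subgroup.commutator_mono ?_ le_top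
  rintro _ ⟨r, hr, rfl⟩
  rw [← QuotientGroup.eq_one_iff, mk_sectionLift]
  exact hr

theorem sectionLift_map_mk'_mul_inv_mem {w : FreeGroup G} (hw : w ∈ commutator (FreeGroup G)) :
    sectionLift N (FreeGroup.map (mk' N) w) * (canonicalPresentation G w)⁻¹ ∈
      ⁅N, (⊤ : Subgroup G)⁆ := by
  refine FreeGroup.mul_inv_mem_commutator_of_mk'_comp_eq
    (M' := (sectionLift N).comp (FreeGroup.map (mk' N))) ?_ hw
  rw [← MonoidHom.comp_assoc, mk'_comp_sectionLift, canonicalPresentation_comp_map]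

theorem sectionLift_map_quotientMap_mul_inv_mem {H : Type*} [Group H] (f : G →* H) (M : Subgroup H)
    [M.Normal] (hle : N ≤ M.comap f) {x : FreeGroup (G ⧸ N)}
    (hx : x ∈ commutator (FreeGroup (G ⧸ N))) :
    sectionLift M (FreeGroup.map (map N M f hle) x) * (f (sectionLift N x))⁻¹ ∈
      ⁅M, (⊤ : Subgroup H)⁆ := by
  refine FreeGroup.mul_inv_mem_commutator_of_mk'_comp_eq
    (M := f.comp (sectionLift N)) (M' := (sectionLift M).comp (FreeGroup.map (map N M f hle)))
    ?_ hx
  rw [← MonoidHom.comp_assoc, mk'_comp_sectionLift, canonicalPresentation_comp_map,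
    ← MonoidHom.comp_assoc, ← mk'_comp_sectionLift N, ← MonoidHom.comp_assoc]
  rfl

theorem exists_mem_hopfNum_sectionLift_mul_inv_mem (hN : N ≤ commutator G) {a : G}
    (ha : a ∈ N) : ∃ x ∈ hopfNum (G ⧸ N), sectionLift N x * a⁻¹ ∈ ⁅N, (⊤ : Subgroup G)⁆ := by
  obtain ⟨w, hw, rfl⟩ : a ∈ (commutator (FreeGroup G)).map (canonicalPresentation G) := by
    rw [MonoidHom.map_commutator_of_surjective canonicalPresentation_surjective]
    exact hN ha
  refine ⟨FreeGroup.map (mk' N) w,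
    Subgroup.mem_inf.mpr ⟨?_, (FreeGroup.map _).map_commutator_le ⟨w, hw, rfl⟩⟩,
    sectionLift_map_mk'_mul_inv_mem N hw⟩
  rw [MonoidHom.mem_ker, ← MonoidHom.comp_apply, canonicalPresentation_comp_map,
    MonoidHom.comp_apply, mk'_apply, QuotientGroup.eq_one_iff]
  exact ha

theorem sectionLift_mem_of_mem_range_H2Map {x : FreeGroup (G ⧸ N)} (hx : x ∈ hopfNum (G ⧸ N))
    (hrange : (mk ⟨x, hx⟩ : H2Group (G ⧸ N)) ∈ (H2Map (mk' N)).range) :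
    sectionLift N x ∈ ⁅N, (⊤ : Subgroup G)⁆ := by
  obtain ⟨ζ, hζ⟩ := hrange
  induction ζ using QuotientGroup.induction_on with
  | _ w =>
    rw [← w.eta w.2, H2Map_mk, QuotientGroup.eq, Subgroup.mem_subgroupOf] at hζ
    have hw : sectionLift N (FreeGroup.map (mk' N) w) ∈ ⁅N, (⊤ : Subgroup G)⁆ := by
      have hw₁ : canonicalPresentation G w = 1 := w.2.1
      simpa [hw₁] using sectionLift_map_mk'_mul_inv_mem N w.2.2
    have hden := map_sectionLift_hopfDen_le N ⟨_, hζ, rfl⟩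
    simpa using mul_mem hw hden

theorem mem_range_H2Map_of_sectionLift_mem {x : FreeGroup (G ⧸ N)} (hx : x ∈ hopfNum (G ⧸ N))
    (hsec : sectionLift N x ∈ ⁅N, (⊤ : Subgroup G)⁆) :
    (mk ⟨x, hx⟩ : H2Group (G ⧸ N)) ∈ (H2Map (mk' N)).range := by
  obtain ⟨y, hy, rfl⟩ : x ∈ (commutator (FreeGroup G)).map (FreeGroup.map (mk' N)) := by
    rw [MonoidHom.map_commutator_of_surjective (FreeGroup.map_surjective (mk'_surjective N))]
    exact hx.2
  have hπy : canonicalPresentation G y ∈ ⁅N, (⊤ : Subgroup G)⁆ := by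
    simpa using mul_mem (inv_mem (sectionLift_map_mk'_mul_inv_mem N hy)) hsec
  obtain ⟨z, hz, hzy⟩ : canonicalPresentation G y ∈
      ⁅(⊤ : Subgroup (FreeGroup G)), N.comap (canonicalPresentation G)⁆.map
        (canonicalPresentation G) := by
    rwa [Subgroup.map_commutator, Subgroup.map_comap_eq_self_of_surjective
      canonicalPresentation_surjective, Subgroup.map_top_of_surjective _
      canonicalPresentation_surjective, Subgroup.commutator_comm]
  have hyz : y * z⁻¹ ∈ hopfNum G := by
    have hz' : z ∈ commutator (FreeGroup G) :=
      Subgroup.commutator_mono le_rfl le_top hz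
    refine Subgroup.mem_inf.mpr ⟨?_, mul_mem hy (inv_mem hz')⟩
    rw [MonoidHom.mem_ker, map_mul, map_inv, hzy, mul_inv_cancel]
  have hzden : FreeGroup.map (mk' N) z ∈ hopfDen (G ⧸ N) := by
    have hle : ⁅(⊤ : Subgroup (FreeGroup G)), N.comap (canonicalPresentation G)⁆.map
        (FreeGroup.map (mk' N)) ≤ hopfDen (G ⧸ N) := by
      rw [Subgroup.map_commutator]
      refine Subgroup.commutator_mono le_top ?_
      rintro _ ⟨r, hr, rfl⟩
      rw [MonoidHom.mem_ker, ← MonoidHom.comp_apply, canonicalPresentation_comp_map,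
        MonoidHom.comp_apply, mk'_apply, QuotientGroup.eq_one_iff]
      exact hr
    exact hle ⟨z, hz, rfl⟩
  refine ⟨mk ⟨y * z⁻¹, hyz⟩, ?_⟩
  rw [H2Map_mk, QuotientGroup.eq, Subgroup.mem_subgroupOf]
  simpa using hzden

end Hopf

theorem comap_commutator_top_le_of_H2Map_surjective {A B : Type*} [Group A] [Group B] {f : A →* B}
    {NA : Subgroup A} {NB : Subgroup B} [NA.Normal] [NB.Normal] (hle : NA ≤ NB.comap f)
    (hNA : NA ≤ commutator A) (hbij : Function.Bijective (map NA NB f hle))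
    (h2 : Function.Surjective (H2Map f)) :
    (⁅NB, (⊤ : Subgroup B)⁆).comap f ≤ ⁅NA, (⊤ : Subgroup A)⁆ := by
  intro a ha
  have haN : a ∈ NA := by
    rw [← QuotientGroup.eq_one_iff, ← hbij.1.eq_iff, map_one, map_mk, QuotientGroup.eq_one_iff]
    exact Subgroup.commutator_le_left _ _ ha
  obtain ⟨x, hx, hxa⟩ := exists_mem_hopfNum_sectionLift_mul_inv_mem NA hNA haN
  have hsec : sectionLift NB (FreeGroup.map (map NA NB f hle) x) ∈ ⁅NB, (⊤ : Subgroup B)⁆ := by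
    have hnat := sectionLift_map_quotientMap_mul_inv_mem NA f NB hle hx.2
    have hfx : f (sectionLift NA x * a⁻¹) ∈ ⁅NB, (⊤ : Subgroup B)⁆ := by
      have hmap : (⁅NA, (⊤ : Subgroup A)⁆).map f ≤ ⁅NB, (⊤ : Subgroup B)⁆ := by
        rw [Subgroup.map_commutator]
        exact Subgroup.commutator_mono (Subgroup.map_le_iff_le_comap.mpr hle) le_top
      exact hmap ⟨_, hxa, rfl⟩
    have := mul_mem hnat (mul_mem hfx ha)
    rwa [map_mul, map_inv, inv_mul_cancel_right, inv_mul_cancel_right] at this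
  obtain ⟨η, hη⟩ := mem_range_H2Map_of_sectionLift_mem NB (map_mem_hopfNum _ hx) hsec
  obtain ⟨ζ, rfl⟩ := h2 η
  have hζ : H2Map (mk' NA) ζ = mk ⟨x, hx⟩ := by
    apply H2Map_injective_of_bijective hbij
    rw [← H2Map_comp, H2Map_mk, ← hη, ← H2Map_comp]
    -- `map NA NB f hle ∘ mk' NA = mk' NB ∘ f` holds by definition
    rfl
  have := mul_mem (inv_mem hxa) (sectionLift_mem_of_mem_range_H2Map NA hx ⟨ζ, hζ⟩)
  rwa [mul_inv_rev, inv_inv, inv_mul_cancel_right] at this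

theorem comap_lowerCentralSeries_le_of_H2Map_surjective {A B : Type*} [Group A] [Group B]
    (f : A →* B) (h1 : Function.Bijective (Abelianization.map f))
    (h2 : Function.Surjective (H2Map f)) (k : ℕ) :
    ((⊤ : Subgroup B).lowerCentralSeries k).comap f ≤ (⊤ : Subgroup A).lowerCentralSeries k := by
  induction k with
  | zero => exact le_top
  | succ k ih =>
    cases k with
    | zero => exact Abelianization.comap_commutator_le_of_map_injective f h1.1
    | succ k =>
      exact comap_commutator_top_le_of_H2Map_surjective (f.lowerCentralSeries_le_comap _)
        (Subgroup.lowerCentralSeries_antitone _ (by omega : 1 ≤ k + 1))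
        (QuotientGroup.map_bijective _ ih
          (f.range_sup_lowerCentralSeries_eq_top (Abelianization.range_sup_commutator_eq_top_of_map_surjective f h1.2) _)) h2

/-- Stallings' integral theorem: if `f : A → B` induces an isomorphism on
`H₁(−; ℤ)` (abelianizations) and a surjection on `H₂(−; ℤ)`, then for every finite
`k`, `f` induces an isomorphism `A/A_k → B/B_k` of lower central series quotients. -/
theorem stmt16 {A B : Type*} [Group A] [Group B] (f : A →* B)
    (h1 : Function.Bijective (Abelianization.map f))
    (h2 : Function.Surjective (H2Map f))
    (k : ℕ)
    (hle : (⊤ : Subgroup A).lowerCentralSeries k ≤ ((⊤ : Subgroup B).lowerCentralSeries k).comap f) :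
    Function.Bijective
      (QuotientGroup.map ((⊤ : Subgroup A).lowerCentralSeries k) ((⊤ : Subgroup B).lowerCentralSeries k) f hle) :=
  QuotientGroup.map_bijective hle (comap_lowerCentralSeries_le_of_H2Map_surjective f h1 h2 k)
    (f.range_sup_lowerCentralSeries_eq_top (Abelianization.range_sup_commutator_eq_top_of_map_surjective f h1.2) k)
end

section
/- Let F be a group, k ≥ 2, and suppose G is a group with surjection p : F → G such that the induced map F/F_k → G/G_k is an isomorphism (lower central series quotients). Then the induced map on relative second homology quotients (F_k ∩ [F₂, F₂])/[F_k, F₂] → (G_k ∩ [G₂, G₂])/[G_k, G₂] is an isomorphism, where F₂ = [F,F] and G₂ = [G,G], provided F₂ is a free group (so that Hopf's formula H₂(F₂/F_k) ≅ (F_k ∩ [F₂,F₂])/[F₂, F_k] applies) and G₂ is a free group. -/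
/-!
Since `F/F_k → G/G_k` is injective, `ker p ≤ F_k ≤ F₂`. As `G₂` is free, `p : F₂ → G₂` has a
homomorphic section `σ`, and then `x ↦ σ(p x)⁻¹ x` is a homomorphism from `F₂` to
`F₂ / [ker p ∩ F₂, F₂]` with central image, hence kills `[F₂, F₂]`, while it is the quotient map
on `ker p`. So `ker p ∩ [F₂, F₂] ≤ [ker p ∩ F₂, F₂] ≤ [F_k, F₂]`, which is injectivity;
surjectivity holds because `p` maps `[F₂, F₂]` onto `[G₂, G₂]` and `p⁻¹(G_k) = F_k`.
-/

open scoped commutatorElement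

theorem IsFreeGroup.exists_rightInverse {K Q : Type*} [Group K] [Group Q] [IsFreeGroup Q]
    (q : K →* Q) (hq : Function.Surjective q) : ∃ σ : Q →* K, ∀ y, q (σ y) = y := by
  let σ : Q →* K := IsFreeGroup.lift fun i => Function.surjInv hq (IsFreeGroup.of i)
  have hqσ : q.comp σ = MonoidHom.id Q :=
    IsFreeGroup.ext_hom fun i => by simp [σ, Function.surjInv_eq hq]
  exact ⟨σ, DFunLike.congr_fun hqσ⟩

section SplitSurjection

variable {K Q : Type*} [Group K] [Group Q] {q : K →* Q}

theorem commute_mk_of_mem_ker {a : K} (ha : a ∈ q.ker) (b : K) :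
    Commute (QuotientGroup.mk a : K ⧸ ⁅q.ker, (⊤ : Subgroup K)⁆)
      (QuotientGroup.mk b : K ⧸ ⁅q.ker, (⊤ : Subgroup K)⁆) := by
  rw [← commutatorElement_eq_one_iff_commute]
  exact (map_commutatorElement (QuotientGroup.mk' _) a b).symm.trans <|
    (QuotientGroup.eq_one_iff _).mpr (Subgroup.commutator_mem_commutator ha (Subgroup.mem_top b))

def kerProjection (σ : Q →* K) (hσ : ∀ y, q (σ y) = y) : K →* K ⧸ ⁅q.ker, (⊤ : Subgroup K)⁆ :=
  MonoidHom.mk' (fun x => ((σ (q x))⁻¹ * x : K)) fun x y => by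
    have hx : (σ (q x))⁻¹ * x ∈ q.ker := by simp [hσ]
    calc (((σ (q (x * y)))⁻¹ * (x * y) : K) : K ⧸ ⁅q.ker, (⊤ : Subgroup K)⁆)
        = ((σ (q y))⁻¹ : K) * (((σ (q x))⁻¹ * x : K) : K ⧸ ⁅q.ker, (⊤ : Subgroup K)⁆)
            * (y : K) := by
          simp only [map_mul, mul_inv_rev, ← QuotientGroup.mk_mul, mul_assoc]
      _ = (((σ (q x))⁻¹ * x : K) : K ⧸ ⁅q.ker, (⊤ : Subgroup K)⁆)
            * (((σ (q y))⁻¹ * y : K)) := by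
          rw [(commute_mk_of_mem_ker hx _).symm.eq, mul_assoc]
          rfl

theorem ker_inf_commutator_le_of_rightInverse (σ : Q →* K) (hσ : ∀ y, q (σ y) = y) :
    q.ker ⊓ commutator K ≤ ⁅q.ker, (⊤ : Subgroup K)⁆ := by
  have hcomm : commutator K ≤ (kerProjection σ hσ).ker := by
    rw [commutator_def, Subgroup.commutator_le]
    intro a _ b _
    rw [MonoidHom.mem_ker, map_commutatorElement, commutatorElement_eq_one_iff_commute]
    exact commute_mk_of_mem_ker (by simp [hσ]) _
  intro s hs
  obtain ⟨hs, hsK⟩ := Subgroup.mem_inf.mp hs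
  have hs_proj := hcomm hsK
  rw [MonoidHom.mem_ker] at hs
  simpa [kerProjection, hs] using hs_proj

end SplitSurjection

section Ambient

variable {F G : Type*} [Group F] [Group G]

theorem ker_inf_commutator_le_of_isFreeGroup_map (p : F →* G) (K : Subgroup F)
    [IsFreeGroup (K.map p)] : p.ker ⊓ ⁅K, K⁆ ≤ ⁅p.ker ⊓ K, K⁆ := by
  obtain ⟨σ, hσ⟩ := IsFreeGroup.exists_rightInverse _ (p.subgroupMap_surjective K)
  have hker : (p.subgroupMap K).ker.map K.subtype ≤ p.ker ⊓ K := by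
    rintro _ ⟨t, ht, rfl⟩
    exact Subgroup.mem_inf.mpr ⟨congrArg Subtype.val ht, t.2⟩
  intro s hs
  obtain ⟨hs, hsK⟩ := Subgroup.mem_inf.mp hs
  rw [← K.map_subtype_commutator] at hsK
  obtain ⟨t, htK, rfl⟩ := hsK
  have ht : t ∈ (p.subgroupMap K).ker := Subtype.ext hs
  have hs_comm := Subgroup.mem_map_of_mem K.subtype
    (ker_inf_commutator_le_of_rightInverse σ hσ (Subgroup.mem_inf.mpr ⟨ht, htK⟩))
  rw [Subgroup.map_commutator, ← MonoidHom.range_eq_map, K.range_subtype] at hs_comm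
  exact Subgroup.commutator_mono hker le_rfl hs_comm

theorem mem_of_map_mem_map {p : F →* G} {A B : Subgroup F} (hAB : A ≤ B)
    (hker : p.ker ⊓ B ≤ A) {x : F} (hxB : x ∈ B) (hx : p x ∈ A.map p) : x ∈ A := by
  obtain ⟨w, hwA, hw⟩ := hx
  have hwx : w⁻¹ * x ∈ p.ker ⊓ B := by
    refine Subgroup.mem_inf.mpr ⟨?_, B.mul_mem (B.inv_mem (hAB hwA)) hxB⟩
    simp [MonoidHom.mem_ker, hw]
  simpa using A.mul_mem hwA (hker hwx)

theorem QuotientGroup.comap_le_of_map_injective {N : Subgroup F} [N.Normal] {M : Subgroup G}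
    [M.Normal] {p : F →* G} (h : N ≤ M.comap p) (hinj : Function.Injective (map N M p h)) :
    M.comap p ≤ N := by
  intro a ha
  rw [← QuotientGroup.eq_one_iff]
  exact hinj (by rw [map_mk, map_one, QuotientGroup.eq_one_iff]; exact ha)

theorem map_lowerCentralSeries_top_of_surjective {p : F →* G} (hp : Function.Surjective p)
    (n : ℕ) : ((⊤ : Subgroup F).lowerCentralSeries n).map p =
      (⊤ : Subgroup G).lowerCentralSeries n := by
  rw [Subgroup.map_lowerCentralSeries, Subgroup.map_top_of_surjective p hp]

theorem map_commutator_of_surjective {p : F →* G} (hp : Function.Surjective p) :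
    (commutator F).map p = commutator G := by
  simpa [commutator_def] using map_lowerCentralSeries_top_of_surjective hp 1

end Ambient

theorem stmt19_general {F G : Type*} [Group F] [Group G] (p : F →* G)
    (hp : Function.Surjective p) (k : ℕ) (hk : 2 ≤ k)
    (hG2 : IsFreeGroup ↥(commutator G))
    (hle : (⊤ : Subgroup F).lowerCentralSeries (k - 1) ≤ ((⊤ : Subgroup G).lowerCentralSeries (k - 1)).comap p)
    (hiso : Function.Bijective (QuotientGroup.map ((⊤ : Subgroup F).lowerCentralSeries (k - 1))
      ((⊤ : Subgroup G).lowerCentralSeries (k - 1)) p hle)) :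
    (∀ x ∈ (⊤ : Subgroup F).lowerCentralSeries (k - 1) ⊓ ⁅commutator F, commutator F⁆,
      ∀ y ∈ (⊤ : Subgroup F).lowerCentralSeries (k - 1) ⊓ ⁅commutator F, commutator F⁆,
        (p x)⁻¹ * p y ∈ ⁅(⊤ : Subgroup G).lowerCentralSeries (k - 1), commutator G⁆ →
          x⁻¹ * y ∈ ⁅(⊤ : Subgroup F).lowerCentralSeries (k - 1), commutator F⁆) ∧
    (∀ g ∈ (⊤ : Subgroup G).lowerCentralSeries (k - 1) ⊓ ⁅commutator G, commutator G⁆,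
      ∃ x ∈ (⊤ : Subgroup F).lowerCentralSeries (k - 1) ⊓ ⁅commutator F, commutator F⁆,
        (p x)⁻¹ * g ∈ ⁅(⊤ : Subgroup G).lowerCentralSeries (k - 1), commutator G⁆) := by
  set Fk := (⊤ : Subgroup F).lowerCentralSeries (k - 1)
  have hcomap : ((⊤ : Subgroup G).lowerCentralSeries (k - 1)).comap p ≤ Fk :=
    QuotientGroup.comap_le_of_map_injective hle hiso.1
  have hFk : Fk ≤ commutator F := by
    simpa [commutator_def] using Subgroup.lowerCentralSeries_antitone ⊤ (by omega : 1 ≤ k - 1)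
  have : IsFreeGroup ((commutator F).map p) := map_commutator_of_surjective hp ▸ hG2
  have hker : p.ker ⊓ ⁅commutator F, commutator F⁆ ≤ ⁅Fk, commutator F⁆ :=
    (ker_inf_commutator_le_of_isFreeGroup_map p _).trans <|
      Subgroup.commutator_mono (inf_le_left.trans ((p.ker_le_comap _).trans hcomap)) le_rfl
  refine ⟨fun x hx y hy hxy => ?_, fun g hg => ?_⟩
  · refine mem_of_map_mem_map (Subgroup.commutator_mono hFk le_rfl) hker
      (Subgroup.mul_mem _ (Subgroup.inv_mem _ hx.2) hy.2) ?_
    rwa [Subgroup.map_commutator, map_lowerCentralSeries_top_of_surjective hp,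
      map_commutator_of_surjective hp, map_mul, map_inv]
  · obtain ⟨hgk, hgc⟩ := Subgroup.mem_inf.mp hg
    rw [← map_commutator_of_surjective hp, ← Subgroup.map_commutator] at hgc
    obtain ⟨x, hx, rfl⟩ := hgc
    exact ⟨x, Subgroup.mem_inf.mpr ⟨hcomap hgk, hx⟩, by simp⟩

/-- Let `p : F → G` be a surjective homomorphism, `k ≥ 2` (so `F_k ≤ F₂ = [F,F]` and
`G_k ≤ G₂ = [G,G]`; here `F_k = (⊤ : Subgroup F).lowerCentralSeries (k-1)`), suppose the commutator
subgroups `F₂` and `G₂` are free, and suppose the induced map `F/F_k → G/G_k` is an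
isomorphism. Then the induced map
`(F_k ∩ [F₂,F₂])/[F_k,F₂] → (G_k ∩ [G₂,G₂])/[G_k,G₂]`
(which via Hopf's formula is `H₂(F₂/F_k) → H₂(G₂/G_k)`) is an isomorphism, stated
elementwise as injectivity and surjectivity of the induced map on cosets. -/
theorem stmt19 {F G : Type*} [Group F] [Group G] (p : F →* G)
    (hp : Function.Surjective p) (k : ℕ) (hk : 2 ≤ k)
    (hF2 : IsFreeGroup ↥(commutator F)) (hG2 : IsFreeGroup ↥(commutator G))
    (hle : (⊤ : Subgroup F).lowerCentralSeries (k - 1) ≤ ((⊤ : Subgroup G).lowerCentralSeries (k - 1)).comap p)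
    (hiso : Function.Bijective (QuotientGroup.map ((⊤ : Subgroup F).lowerCentralSeries (k - 1))
      ((⊤ : Subgroup G).lowerCentralSeries (k - 1)) p hle)) :
    (∀ x ∈ (⊤ : Subgroup F).lowerCentralSeries (k - 1) ⊓ ⁅commutator F, commutator F⁆,
      ∀ y ∈ (⊤ : Subgroup F).lowerCentralSeries (k - 1) ⊓ ⁅commutator F, commutator F⁆,
        (p x)⁻¹ * p y ∈ ⁅(⊤ : Subgroup G).lowerCentralSeries (k - 1), commutator G⁆ →
          x⁻¹ * y ∈ ⁅(⊤ : Subgroup F).lowerCentralSeries (k - 1), commutator F⁆) ∧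
    (∀ g ∈ (⊤ : Subgroup G).lowerCentralSeries (k - 1) ⊓ ⁅commutator G, commutator G⁆,
      ∃ x ∈ (⊤ : Subgroup F).lowerCentralSeries (k - 1) ⊓ ⁅commutator F, commutator F⁆,
        (p x)⁻¹ * g ∈ ⁅(⊤ : Subgroup G).lowerCentralSeries (k - 1), commutator G⁆) :=
  stmt19_general p hp k hk hG2 hle hiso
end
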